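/- arXiv:2509.07761 — 3 statements merged into one kernel-verified Lean document; each statement's English description precedes it below -/
import Mathlib

section
/- For a finite field F_q = {α_1,…,α_q} and integer k with 1 ≤ k ≤ q, the projective Reed–Solomon code PRS_q(k) (the image of the evaluation of homogeneous polynomials of degree k-1 in F_q[X,Y] at the q+1 points (0,1),(1,α_1),…,(1,α_q)) has minimum distance q+2-k. -/
/-!
A nonzero binary form of degree `d = k - 1` has at most `d` zeros on `ℙ¹(F_q)`: dehomogenizing it
gives a nonzero polynomial `p` of degree `≤ d` whose roots are the affine zeros, and the form
vanishes at the point at infinity exactly when the coefficient of `X ^ d` in `p` is zero, in which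
case `p` has degree `< d`. So every nonzero codeword has weight `≥ q + 1 - d = q + 2 - k`, and the
form `∏_{a ∈ S} (Y - a X)`, for a `d`-element subset `S ⊆ F_q`, attains this bound.
-/

noncomputable def dualCode (F : Type*) [Field F] {ι : Type*} [Fintype ι]
    (C : Submodule F (ι → F)) : Submodule F (ι → F) where
  carrier := {x | ∀ c ∈ C, ∑ i, x i * c i = 0}
  zero_mem' := by intro c _; simp
  add_mem' := by
    intro x y hx hy c hc
    simp only [Pi.add_apply, add_mul, Finset.sum_add_distrib]
    rw [hx c hc, hy c hc, add_zero]
  smul_mem' := by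
    intro a x hx c hc
    simp only [Pi.smul_apply, smul_eq_mul, mul_assoc, ← Finset.mul_sum]
    rw [hx c hc, mul_zero]

noncomputable def minDist (F : Type*) [Field F] {ι : Type*} [Fintype ι] [DecidableEq F]
    (C : Submodule F (ι → F)) : ℕ :=
  sInf {w | ∃ c ∈ C, c ≠ 0 ∧ hammingNorm c = w}

/-- Evaluation points of the projective Reed–Solomon code: the point at infinity `(0,1)`
(indexed by `none`) and the affine points `(1,α)` for `α ∈ F` (indexed by `some α`). -/
noncomputable def PRSpt (F : Type*) [Field F] (p : Option F) : Fin 2 → F :=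
  Option.elim p ![(0 : F), 1] (fun α => ![1, α])

/-- The projective Reed–Solomon code `PRS_q(k)`: the image of the space of homogeneous
polynomials of degree `k - 1` in two variables under evaluation at the `q+1` points of
`ℙ¹(F)`.  By convention it is `{0}` for `k ≤ 0` (and it is the full space for `k ≥ q+1`). -/
noncomputable def PRS (F : Type*) [Field F] (k : ℤ) : Submodule F (Option F → F) :=
  if k ≤ 0 then ⊥
  else (MvPolynomial.homogeneousSubmodule (Fin 2) F (k - 1).toNat).map
    (LinearMap.pi fun p : Option F => (MvPolynomial.aeval (PRSpt F p)).toLinearMap)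

open Polynomial Finset

theorem minDist_eq_of_forall_le {F : Type*} [Field F] {ι : Type*} [Fintype ι] [DecidableEq F]
    {C : Submodule F (ι → F)} {n : ℕ} (hn : ∃ c ∈ C, c ≠ 0 ∧ hammingNorm c = n)
    (hle : ∀ c ∈ C, c ≠ 0 → n ≤ hammingNorm c) : minDist F C = n :=
  IsLeast.csInf_eq ⟨hn, by rintro _ ⟨c, hc, hc0, rfl⟩; exact hle c hc hc0⟩

theorem hammingNorm_add_card_filter_eq_zero {ι β : Type*} [Fintype ι] [Zero β] [DecidableEq β]
    (c : ι → β) : hammingNorm c + #{i | c i = 0} = Fintype.card ι := by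
  rw [hammingNorm, add_comm, card_filter_add_card_filter_not, card_univ]

theorem card_filter_option {α : Type*} [Fintype α] (P : Option α → Prop) [DecidablePred P] :
    #{x | P x} = (if P none then 1 else 0) + #{a | P (some a)} := by
  simp only [card_filter, Fintype.sum_option]

namespace Polynomial

section CommSemiring

variable {R : Type*} [CommSemiring R]

/-- The values of the degree-`n` homogenization of `p` on `ℙ¹(R) = Option R`, `none` being the
point at infinity. -/
def evalProj (n : ℕ) (p : R[X]) (x : Option R) : R :=
  x.elim (p.coeff n) p.eval

@[simp]
theorem evalProj_zero (n : ℕ) : evalProj n (0 : R[X]) = 0 := by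
  funext x
  cases x <;> simp [evalProj]

theorem aeval_one_zero_homogenize (p : R[X]) (n : ℕ) :
    MvPolynomial.aeval ![(1 : R), 0] (p.homogenize n) = p.coeff n := by
  rw [homogenize, map_sum, sum_eq_single (n, 0)]
  · simp [MvPolynomial.aeval_monomial]
  · rintro ⟨i, j⟩ hij hne
    rw [HasAntidiagonal.mem_antidiagonal] at hij
    have hj : j ≠ 0 := by rintro rfl; exact hne (by simpa using hij)
    simp [MvPolynomial.aeval_monomial, hj]
  · simp

theorem natDegree_aeval_X_one_le {P : MvPolynomial (Fin 2) R} {n : ℕ} (hP : P.IsHomogeneous n) :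
    (MvPolynomial.aeval ![(X : R[X]), 1] P).natDegree ≤ n := by
  rw [P.as_sum, map_sum]
  refine natDegree_sum_le_of_forall_le _ _ fun m hm => ?_
  have hdeg := hP (MvPolynomial.mem_support_iff.1 hm)
  rw [Finsupp.weight_apply, Finsupp.sum_fintype _ _ (by simp), Fin.sum_univ_two] at hdeg
  rw [MvPolynomial.aeval_monomial, Finsupp.prod_fintype _ _ (fun i => pow_zero _),
    Fin.prod_univ_two]
  simp only [Matrix.cons_val_zero, Matrix.cons_val_one, one_pow, mul_one, ← C_eq_algebraMap]
  exact (natDegree_C_mul_X_pow_le _ _).trans (by simp at hdeg; omega)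

end CommSemiring

section Domain

variable {R : Type*} [CommRing R] [IsDomain R]

theorem coeff_card_prod_X_sub_C (s : Finset R) : (∏ a ∈ s, (X - C a)).coeff #s = 1 := by
  simpa [natDegree_finsetProd_X_sub_C_eq_card] using (monic_prod_X_sub_C id s).coeff_natDegree

variable [Fintype R] [DecidableEq R]

theorem card_filter_evalProj_eq_zero_le {p : R[X]} {n : ℕ} (hp : p ≠ 0) (hn : p.natDegree ≤ n) :
    #{x | evalProj n p x = 0} ≤ n := by
  have hroots : #{a | p.eval a = 0} ≤ p.natDegree :=
    card_le_degree_of_subset_roots fun a ha => (mem_roots hp).2 (mem_filter.1 ha).2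
  rw [card_filter_option]
  change (if p.coeff n = 0 then 1 else 0) + #{a | p.eval a = 0} ≤ n
  split_ifs with hcoeff
  · have : p.natDegree < n := lt_of_le_of_ne hn fun hdeg =>
      hp (leadingCoeff_eq_zero.1 (by rwa [leadingCoeff, hdeg]))
    omega
  · omega

theorem card_filter_evalProj_prod_X_sub_C_eq_zero (s : Finset R) :
    #{x | evalProj #s (∏ a ∈ s, (X - C a)) x = 0} = #s := by
  rw [card_filter_option]
  simp only [evalProj, Option.elim, coeff_card_prod_X_sub_C, one_ne_zero, if_false, zero_add]
  congr 1
  ext a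
  simp [eval_prod, prod_eq_zero_iff, sub_eq_zero]

end Domain

end Polynomial

section PRS

variable {F : Type*} [Field F]

-- `homogenize` dehomogenizes at `X 1 = 1`, whereas `PRSpt` puts the affine points at `X 0 = 1`.
theorem aeval_PRSpt_rename_rev_homogenize {p : F[X]} {n : ℕ} (hp : p.natDegree ≤ n)
    (x : Option F) :
    MvPolynomial.aeval (PRSpt F x) (MvPolynomial.rename Fin.rev (p.homogenize n)) =
      p.evalProj n x := by
  rw [MvPolynomial.aeval_rename]
  cases x with
  | none =>
    have hpt : PRSpt F none ∘ Fin.rev = ![1, 0] := by funext i; fin_cases i <;> rfl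
    rw [hpt, aeval_one_zero_homogenize]
    rfl
  | some α =>
    have hpt : PRSpt F (some α) ∘ Fin.rev = ![α, 1] := by funext i; fin_cases i <;> rfl
    rw [hpt, aeval_homogenize_of_eq_one hp _ rfl, coe_aeval_eq_eval]
    rfl

theorem exists_rename_rev_homogenize_eq {P : MvPolynomial (Fin 2) F} {n : ℕ}
    (hP : P.IsHomogeneous n) :
    ∃ p : F[X], p.natDegree ≤ n ∧ MvPolynomial.rename Fin.rev (p.homogenize n) = P := by
  have hQ := hP.rename_isHomogeneous (f := Fin.rev)
  refine ⟨_, natDegree_aeval_X_one_le hQ, ?_⟩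
  rw [homogenize_eq_of_isHomogeneous hQ rfl, MvPolynomial.rename_rename,
    Fin.rev_involutive.comp_self, MvPolynomial.rename_id_apply]

theorem mem_PRS_iff {d : ℕ} {c : Option F → F} :
    c ∈ PRS F (d + 1 : ℕ) ↔ ∃ p : F[X], p.natDegree ≤ d ∧ p.evalProj d = c := by
  have hd : (((d + 1 : ℕ) : ℤ) - 1).toNat = d := by omega
  rw [PRS, if_neg (by omega), hd, Submodule.mem_map]
  constructor
  · rintro ⟨P, hP, rfl⟩
    obtain ⟨p, hp, rfl⟩ :=
      exists_rename_rev_homogenize_eq ((MvPolynomial.mem_homogeneousSubmodule _ _).1 hP)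
    exact ⟨p, hp, funext fun x => (aeval_PRSpt_rename_rev_homogenize hp x).symm⟩
  · rintro ⟨p, hp, rfl⟩
    refine ⟨MvPolynomial.rename Fin.rev (p.homogenize d), ?_, ?_⟩
    · exact (MvPolynomial.mem_homogeneousSubmodule _ _).2
        (isHomogeneous_homogenize p).rename_isHomogeneous
    · exact funext fun x => aeval_PRSpt_rename_rev_homogenize hp x

end PRS

/-- the projective Reed–Solomon code `PRS_q(k)` with `1 ≤ k ≤ q` has minimum
distance `q + 2 - k`. -/
theorem PRS_minDist (F : Type*) [Field F] [Fintype F] [DecidableEq F] (q k : ℕ)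
    (hq : Fintype.card F = q) (hk1 : 1 ≤ k) (hk2 : k ≤ q) :
    minDist F (PRS F (k : ℤ)) = q + 2 - k := by
  subst hq
  obtain ⟨d, rfl⟩ : ∃ d, k = d + 1 := ⟨k - 1, by omega⟩
  apply minDist_eq_of_forall_le
  · obtain ⟨s, -, rfl⟩ := exists_subset_card_eq (s := (univ : Finset F)) (n := d)
      (by rw [card_univ]; omega)
    refine ⟨evalProj #s (∏ a ∈ s, (X - C a)), mem_PRS_iff.2 ⟨_, ?_, rfl⟩, ?_, ?_⟩
    · rw [natDegree_finsetProd_X_sub_C_eq_card]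
    · exact fun h => one_ne_zero ((coeff_card_prod_X_sub_C s).symm.trans (congrFun h none))
    · have := hammingNorm_add_card_filter_eq_zero (evalProj #s (∏ a ∈ s, (X - C a)))
      rw [card_filter_evalProj_prod_X_sub_C_eq_zero, Fintype.card_option] at this
      omega
  · intro c hc hc0
    obtain ⟨p, hp, rfl⟩ := mem_PRS_iff.1 hc
    have hzeros := card_filter_evalProj_eq_zero_le (by rintro rfl; exact hc0 (evalProj_zero d)) hp
    have := hammingNorm_add_card_filter_eq_zero (evalProj d p)
    rw [Fintype.card_option] at this
    omega
end

section
/- For a finite field F_q and integer k with 0 ≤ k ≤ q+1, the dual of the projective Reed–Solomon code PRS_q(k) with respect to the standard Euclidean bilinear form on F_q^{q+1} equals PRS_q(q+1-k). -/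
/-! The evaluation vector of the monomial `X^(d-j) Y^j` has affine coordinates `α ^ j` and
coordinate `0 ^ (d - j)` at infinity. When `d₁ + d₂ = q - 1`, the coordinatewise product of two
such vectors is the evaluation vector of a monomial of degree `q - 1`, and its coordinates sum to
zero: `∑ α, α ^ j` vanishes for `j < q - 1`, while for `j = q - 1` it is `-1`, cancelled by the
point at infinity. Hence `PRS(q + 1 - k) ≤ PRS(k)^⊥`. For `d ≤ q` the `d + 1` monomial vectors are
linearly independent (the point at infinity kills the top coefficient, and a polynomial of degree
`< q` vanishing on `F` is zero), so `dim PRS(k) = k` and the inclusion is an equality. -/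

open Finset MvPolynomial Module

theorem sum_pow_card_sub_one_eq_neg_one (K : Type*) [Field K] [Fintype K] :
    ∑ x : K, x ^ (Fintype.card K - 1) = -1 := by
  classical
  have hq : 1 < Fintype.card K := Fintype.one_lt_card
  rw [← sum_erase _ (zero_pow (by omega)),
    sum_congr rfl fun x hx => FiniteField.pow_card_sub_one_eq_one x (ne_of_mem_erase hx),
    sum_const, card_erase_of_mem (mem_univ _), card_univ, nsmul_one,
    Nat.cast_sub hq.le, FiniteField.cast_card_eq_zero, Nat.cast_one, zero_sub]

section DualCode

variable {F : Type*} [Field F] {ι : Type*} [Fintype ι]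

theorem mem_dualCode_iff {C : Submodule F (ι → F)} {x : ι → F} :
    x ∈ dualCode F C ↔ ∀ c ∈ C, x ⬝ᵥ c = 0 :=
  Iff.rfl

theorem dualCode_eq_orthogonal [DecidableEq ι] (C : Submodule F (ι → F)) :
    dualCode F C =
      LinearMap.BilinForm.orthogonal (Matrix.toLinearMap₂' F (1 : Matrix ι ι F)) C := by
  ext x
  simp [mem_dualCode_iff, Matrix.toLinearMap₂'_apply', dotProduct_comm x]

theorem finrank_dualCode (C : Submodule F (ι → F)) :
    finrank F (dualCode F C) = Fintype.card ι - finrank F C := by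
  classical
  rw [dualCode_eq_orthogonal, LinearMap.BilinForm.finrank_orthogonal
    (LinearMap.nondegenerate_toLinearMap₂'_of_det_ne_zero' (by simp)), finrank_fintype_fun_eq_card]

theorem span_le_dualCode_span {s t : Set (ι → F)} (h : ∀ x ∈ s, ∀ y ∈ t, x ⬝ᵥ y = 0) :
    Submodule.span F s ≤ dualCode F (Submodule.span F t) := by
  classical
  refine Submodule.span_le.mpr fun x hx c hc => ?_
  have hker : Submodule.span F t ≤ LinearMap.ker (dotProductEquiv F ι x) :=
    Submodule.span_le.mpr fun y hy => h x hx y hy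
  exact hker hc

@[simp]
theorem dualCode_bot : dualCode F (⊥ : Submodule F (ι → F)) = ⊤ := by
  ext x
  simp [mem_dualCode_iff]

end DualCode

section Monomial

variable (F : Type*) [Field F]

noncomputable def monomialVec (d j : ℕ) : Option F → F :=
  fun p => PRSpt F p 0 ^ (d - j) * PRSpt F p 1 ^ j

variable {F}

@[simp]
theorem monomialVec_none (d j : ℕ) : monomialVec F d j none = 0 ^ (d - j) := by
  simp [monomialVec, PRSpt]

@[simp]
theorem monomialVec_some (d j : ℕ) (α : F) : monomialVec F d j (some α) = α ^ j := by
  simp [monomialVec, PRSpt]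

theorem monomialVec_mul_monomialVec {d₁ d₂ i j : ℕ} (hi : i ≤ d₁) (hj : j ≤ d₂) :
    monomialVec F d₁ i * monomialVec F d₂ j = monomialVec F (d₁ + d₂) (i + j) := by
  ext p
  simp only [monomialVec, Pi.mul_apply, show d₁ + d₂ - (i + j) = (d₁ - i) + (d₂ - j) by omega,
    pow_add]
  ring

theorem sum_monomialVec_eq_zero [Fintype F] {j : ℕ} (hj : j ≤ Fintype.card F - 1) :
    ∑ p, monomialVec F (Fintype.card F - 1) j p = 0 := by
  rw [Fintype.sum_option, monomialVec_none]
  simp only [monomialVec_some]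
  rcases hj.lt_or_eq with hj | rfl
  · rw [FiniteField.sum_pow_lt_card_sub_one F j hj, zero_pow (by omega), add_zero]
  · rw [Nat.sub_self, pow_zero, sum_pow_card_sub_one_eq_neg_one, add_neg_cancel]

theorem monomialVec_dotProduct_monomialVec [Fintype F] {d₁ d₂ i j : ℕ}
    (hd : d₁ + d₂ + 1 = Fintype.card F) (hi : i ≤ d₁) (hj : j ≤ d₂) :
    monomialVec F d₁ i ⬝ᵥ monomialVec F d₂ j = 0 := by
  have hsum := sum_monomialVec_eq_zero (F := F) (j := i + j) (by omega)
  rwa [show Fintype.card F - 1 = d₁ + d₂ by omega, ← monomialVec_mul_monomialVec hi hj] at hsum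

theorem linearIndependent_monomialVec [Fintype F] {d : ℕ} (hd : d ≤ Fintype.card F) :
    LinearIndependent F (fun j : Fin (d + 1) => monomialVec F d j) := by
  classical
  rw [Fintype.linearIndependent_iff]
  intro g hg
  set Q : Polynomial F := Polynomial.ofFn (d + 1) g
  have hlast : g (Fin.last d) = 0 := by
    have := congrFun hg none
    simp only [Finset.sum_apply, Pi.smul_apply, smul_eq_mul, monomialVec_none] at this
    rwa [sum_eq_single_of_mem _ (mem_univ _) fun j _ hj => ?_, Fin.val_last, Nat.sub_self,
      pow_zero, mul_one] at this
    rw [zero_pow (by have := Fin.val_lt_last hj; omega), mul_zero]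
  have hdeg : Q.degree < d := by
    rw [Polynomial.degree_lt_iff_coeff_zero]
    intro m hm
    rcases hm.eq_or_lt with rfl | hm
    · exact (Polynomial.ofFn_coeff_eq_val_of_lt _ (Nat.lt_succ_self d)).trans hlast
    · exact Polynomial.ofFn_coeff_eq_zero_of_ge _ hm
  have hQ : Q = 0 := by
    refine Polynomial.eq_zero_of_degree_lt_of_eval_finset_eq_zero univ
      (hdeg.trans_le (by simpa using hd)) fun α _ => ?_
    have := congrFun hg (some α)
    simpa [Q, Polynomial.ofFn_eq_sum_monomial, Polynomial.eval_finsetSum, mul_comm] using this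
  exact congrFun (Polynomial.injective_ofFn (d + 1) (hQ.trans (map_zero _).symm))

end Monomial

section PRS

variable {F : Type*} [Field F]

theorem PRS_of_nonpos {k : ℤ} (hk : k ≤ 0) : PRS F k = ⊥ :=
  if_pos hk

theorem PRS_natCast_add_one (d : ℕ) :
    PRS F (d + 1) = Submodule.span F (Set.range fun j : Fin (d + 1) => monomialVec F d j) := by
  rw [PRS, if_neg (by omega), show ((d : ℤ) + 1 - 1).toNat = d by omega,
    (homogeneousSubmodule_eq_finsupp_supported _ _ _).trans (restrictSupport_eq_span _ _),
    Submodule.map_span, Set.image_image]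
  congr 1
  ext x
  simp only [Set.mem_image, Set.mem_ofPred_eq, Set.mem_range, Finsupp.degree_eq_sum,
    Fin.sum_univ_two]
  constructor
  · rintro ⟨v, hv, rfl⟩
    refine ⟨⟨v 1, by omega⟩, funext fun p => ?_⟩
    simp [aeval_monomial, Finsupp.prod_fintype, monomialVec, show d - v 1 = v 0 by omega]
  · rintro ⟨j, rfl⟩
    refine ⟨Finsupp.equivFunOnFinite.symm ![d - j, j], ?_, funext fun p => ?_⟩
    · simp [Nat.sub_add_cancel (Fin.is_le j)]
    · simp [aeval_monomial, Finsupp.prod_fintype, monomialVec]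

theorem finrank_PRS [Fintype F] {m : ℕ} (hm : m ≤ Fintype.card F + 1) :
    finrank F (PRS F m) = m := by
  rcases m with _ | d
  · rw [Nat.cast_zero, PRS_of_nonpos le_rfl, finrank_bot]
  · rw [Nat.cast_succ, PRS_natCast_add_one,
      finrank_span_eq_card (linearIndependent_monomialVec (by omega)), Fintype.card_fin]

theorem PRS_le_dualCode_PRS [Fintype F] {k l : ℕ} (hkl : k + l = Fintype.card F + 1) :
    PRS F l ≤ dualCode F (PRS F k) := by
  rcases k with _ | d₁
  · rw [Nat.cast_zero, PRS_of_nonpos le_rfl, dualCode_bot]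
    exact le_top
  rcases l with _ | d₂
  · rw [Nat.cast_zero, PRS_of_nonpos le_rfl]
    exact bot_le
  rw [Nat.cast_succ, Nat.cast_succ, PRS_natCast_add_one, PRS_natCast_add_one]
  refine span_le_dualCode_span ?_
  rintro _ ⟨j, rfl⟩ _ ⟨i, rfl⟩
  exact monomialVec_dotProduct_monomialVec (by omega) (Fin.is_le j) (Fin.is_le i)

end PRS

/-- for `0 ≤ k ≤ q + 1`, the dual of `PRS_q(k)` is `PRS_q(q + 1 - k)`. -/
theorem PRS_dual (F : Type*) [Field F] [Fintype F] (q k : ℕ)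
    (hq : Fintype.card F = q) (hk : k ≤ q + 1) :
    dualCode F (PRS F (k : ℤ)) = PRS F ((q : ℤ) + 1 - k) := by
  subst hq
  rw [show (Fintype.card F : ℤ) + 1 - k = ((Fintype.card F + 1 - k : ℕ) : ℤ) by omega]
  refine (Submodule.eq_of_le_of_finrank_eq (PRS_le_dualCode_PRS (by omega)) ?_).symm
  rw [finrank_dualCode, finrank_PRS hk, finrank_PRS (by omega), Fintype.card_option]
end

section
/- Let 1 ≤ k_1 < k_2 ≤ q be integers. Then PRS_q(k_1) + PRS_q(k_2) = span{(1,0,…,0)} + (0, RS_q(k_2)) inside F_q^{q+1}. -/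
/-- The affine Reed–Solomon code `RS_q(k)`: evaluations of polynomials of degree `< k` at
all elements of `F`.  By convention it is `{0}` for `k ≤ 0` and the full space for `k ≥ q`. -/
noncomputable def RS (F : Type*) [Field F] (k : ℤ) : Submodule F (F → F) :=
  (Polynomial.degreeLT F k.toNat).map
    (LinearMap.pi fun α : F => (Polynomial.aeval α).toLinearMap)

/-- `(0, C)`: the code obtained by prepending a zero coordinate (at `none`) to each word. -/
noncomputable def zeroExt (F : Type*) [Field F] (C : Submodule F (F → F)) :
    Submodule F (Option F → F) :=
  C.comap (LinearMap.funLeft F F some) ⊓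
    LinearMap.ker (LinearMap.proj (R := F) (φ := fun _ : Option F => F) none)

/-! `PRS_q(k)` is spanned by the evaluations of the monomials `x^a y^b` with `a + b = k - 1`.
Such a word is `(0, (α^b)_α)` when `a > 0`, and has an extra `1` at the point at infinity `(0,1)`
when `a = 0`. Subtracting `y^(k₁-1)` from `x^(k₂-k₁) y^(k₁-1)` isolates `(1,0,…,0)`; modulo it,
the monomials of degree `k₂ - 1` give every `(0, (α^j)_α)` with `j < k₂`, which span
`(0, RS_q(k₂))`. -/

section

open MvPolynomial Submodule

variable {F : Type*} [Field F]

variable (F) in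
noncomputable def prsWord (a b : ℕ) : Option F → F :=
  fun p => PRSpt F p 0 ^ a * PRSpt F p 1 ^ b

lemma pi_aeval_PRSpt_monomial (d : Fin 2 →₀ ℕ) :
    LinearMap.pi (fun p => (aeval (PRSpt F p)).toLinearMap) (monomial d (1 : F)) =
      prsWord F (d 0) (d 1) := by
  ext p
  simp [prsWord, aeval_monomial, Finsupp.prod_fintype _ _ (fun i => pow_zero _), Fin.prod_univ_two]

lemma PRS_natCast_succ (k : ℕ) :
    PRS F ((k + 1 : ℕ) : ℤ) = span F ((fun b => prsWord F (k - b) b) '' Set.Iic k) := by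
  rw [PRS, if_neg (by omega), show ((k + 1 : ℕ) - 1 : ℤ).toNat = k by omega,
    homogeneousSubmodule_eq_finsupp_supported, AddMonoidAlgebra.supported_eq_span_single,
    map_span, Set.image_image]
  have hdeg (d : Fin 2 →₀ ℕ) : d.degree = d 0 + d 1 := by
    simp [Finsupp.degree_eq_sum, Fin.sum_univ_two]
  congr 1
  ext v
  constructor
  · rintro ⟨d, hd, rfl⟩
    have hk : d 0 + d 1 = k := (hdeg d).symm.trans hd
    refine ⟨d 1, by rw [Set.mem_Iic]; omega, ?_⟩
    simp only [show k - d 1 = d 0 by omega]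
    exact (pi_aeval_PRSpt_monomial d).symm
  · rintro ⟨b, hb, rfl⟩
    rw [Set.mem_Iic] at hb
    refine ⟨Finsupp.single 0 (k - b) + Finsupp.single 1 b, ?_, ?_⟩
    · simpa [hdeg] using Nat.sub_add_cancel hb
    · exact (pi_aeval_PRSpt_monomial _).trans (by simp)

variable (F) in
noncomputable def zeroExtPow (j : ℕ) : Option F → F :=
  Function.extend some (· ^ j) 0

@[simp]
lemma zeroExtPow_none (j : ℕ) : zeroExtPow F j none = 0 :=
  Function.extend_apply' _ _ _ (by simp)

@[simp]
lemma zeroExtPow_some (j : ℕ) (α : F) : zeroExtPow F j (some α) = α ^ j :=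
  (Option.some_injective F).extend_apply _ _ _

lemma prsWord_zero_left [DecidableEq F] (b : ℕ) :
    prsWord F 0 b = Pi.single none 1 + zeroExtPow F b := by
  ext (_ | α) <;> simp [prsWord, PRSpt]

lemma prsWord_of_ne_zero {a : ℕ} (ha : a ≠ 0) (b : ℕ) : prsWord F a b = zeroExtPow F b := by
  ext (_ | α) <;> simp [prsWord, PRSpt, ha]

lemma zeroExt_eq_map (C : Submodule F (F → F)) :
    zeroExt F C = C.map (Function.ExtendByZero.linearMap F some) := by
  ext v
  constructor
  · rintro ⟨hC, hnone⟩
    refine ⟨v ∘ some, hC, funext fun p => ?_⟩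
    cases p with
    | none => exact (Function.extend_apply' _ _ _ (by simp)).trans hnone.symm
    | some α => exact (Option.some_injective F).extend_apply _ _ _
  · rintro ⟨g, hg, rfl⟩
    refine ⟨?_, Function.extend_apply' _ _ _ (by simp)⟩
    change (fun α => Function.extend some g 0 (some α)) ∈ C
    simp only [(Option.some_injective F).extend_apply]
    exact hg

lemma zeroExt_RS_natCast [DecidableEq F] (k : ℕ) :
    zeroExt F (RS F k) = span F (zeroExtPow F '' Set.Iio k) := by
  rw [zeroExt_eq_map, RS, Int.toNat_natCast, Polynomial.degreeLT_eq_span_X_pow, map_span,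
    map_span, Set.image_image, Finset.coe_image, Finset.coe_range, Set.image_image]
  congr 1
  refine Set.image_congr fun j _ => congrArg (Function.extend some · (0 : Option F → F)) ?_
  ext α
  simp

lemma prsWord_mem_sup [DecidableEq F] (a : ℕ) {b k : ℕ} (hb : b < k) :
    prsWord F a b ∈ span F {Pi.single none 1} ⊔ span F (zeroExtPow F '' Set.Iio k) := by
  have hpow : zeroExtPow F b ∈ span F {Pi.single none 1} ⊔ span F (zeroExtPow F '' Set.Iio k) :=
    mem_sup_right (subset_span ⟨b, hb, rfl⟩)
  rcases eq_or_ne a 0 with rfl | ha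
  · rw [prsWord_zero_left]
    exact add_mem (mem_sup_left (mem_span_singleton_self _)) hpow
  · rwa [prsWord_of_ne_zero ha]

lemma span_prsWord_sup_span_prsWord [DecidableEq F] {m n : ℕ} (hmn : m < n) :
    span F ((fun b => prsWord F (m - b) b) '' Set.Iic m) ⊔
        span F ((fun b => prsWord F (n - b) b) '' Set.Iic n) =
      span F {Pi.single none 1} ⊔ span F (zeroExtPow F '' Set.Iio (n + 1)) := by
  apply le_antisymm
  · refine sup_le (span_le.mpr ?_) (span_le.mpr ?_) <;>
      rintro _ ⟨b, hb, rfl⟩ <;> exact prsWord_mem_sup _ (by rw [Set.mem_Iic] at hb; omega)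
  set L := span F ((fun b => prsWord F (m - b) b) '' Set.Iic m) ⊔
    span F ((fun b => prsWord F (n - b) b) '' Set.Iic n)
  have hmem_n {b : ℕ} (hb : b ≤ n) : prsWord F (n - b) b ∈ L :=
    mem_sup_right (subset_span ⟨b, hb, rfl⟩)
  have hmem_m : prsWord F 0 m ∈ L :=
    mem_sup_left (subset_span ⟨m, le_refl m, by simp only [Nat.sub_self]⟩)
  -- `y^m ∈ PRS(m+1)` and `x^(n-m) y^m ∈ PRS(n+1)` differ only at the point at infinity
  have he : Pi.single none 1 ∈ L := by
    have := sub_mem hmem_m (hmem_n hmn.le)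
    rwa [prsWord_zero_left, prsWord_of_ne_zero (by omega), add_sub_cancel_right] at this
  refine sup_le (span_le.mpr (Set.singleton_subset_iff.mpr he)) (span_le.mpr ?_)
  rintro _ ⟨j, hj, rfl⟩
  rcases Nat.lt_or_eq_of_le (Nat.le_of_lt_succ hj) with hj | rfl
  · rw [← prsWord_of_ne_zero (a := n - j) (by omega)]
    exact hmem_n hj.le
  · have := sub_mem (hmem_n le_rfl) he
    rwa [Nat.sub_self, prsWord_zero_left, add_sub_cancel_left] at this

end

theorem PRS_sum_general (F : Type*) [Field F] [DecidableEq F] (k₁ k₂ : ℕ)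
    (h1 : 1 ≤ k₁) (h12 : k₁ < k₂) :
    PRS F (k₁ : ℤ) ⊔ PRS F (k₂ : ℤ) =
      Submodule.span F {Pi.single (none : Option F) (1 : F)} ⊔ zeroExt F (RS F (k₂ : ℤ)) := by
  obtain ⟨m, rfl⟩ := Nat.exists_eq_add_of_le' h1
  obtain ⟨n, rfl⟩ := Nat.exists_eq_add_of_le' (h1.trans h12.le)
  rw [PRS_natCast_succ, PRS_natCast_succ, zeroExt_RS_natCast]
  exact span_prsWord_sup_span_prsWord (by omega)

/-- for `1 ≤ k₁ < k₂ ≤ q`,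
`PRS_q(k₁) + PRS_q(k₂) = span{(1,0,…,0)} + (0, RS_q(k₂))`. -/
theorem PRS_sum (F : Type*) [Field F] [Fintype F] [DecidableEq F] (q k₁ k₂ : ℕ)
    (hq : Fintype.card F = q) (h1 : 1 ≤ k₁) (h12 : k₁ < k₂) (h2 : k₂ ≤ q) :
    PRS F (k₁ : ℤ) ⊔ PRS F (k₂ : ℤ) =
      Submodule.span F {Pi.single (none : Option F) (1 : F)} ⊔ zeroExt F (RS F (k₂ : ℤ)) :=
  PRS_sum_general F k₁ k₂ h1 h12
end
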